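/- Let W ∈ ℝ^{N×N} be symmetric positive definite, B ∈ ℝ^{N×M}, and let A ∈ ℝ^{N×N} satisfy A·W + W·A = −B·Bᵀ. If A is Hurwitz, then the cross Gramian of the state-space symmetric system (A, B, Bᵀ) equals the prescribed matrix W, i.e. ∫₀^∞ exp(tA) B Bᵀ exp(tA) dt = W. In other words, the inverse Sylvester procedure produces a system whose cross Gramian is exactly the prescribed positive definite matrix. -/

import Mathlib

/-!
Since `A` commutes with `e^{tA}`, the Sylvester equation gives
`d/dt (e^{tA} W e^{tA}) = e^{tA} (A W + W A) e^{tA} = -e^{tA} B Bᵀ e^{tA}`,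
so `-e^{tA} W e^{tA}` is an antiderivative of the integrand; it is `-W` at `t = 0` and tends
to `0` at infinity, so the integral is `W`.

On a generalized eigenvector for `μ`, `e^{tA}` acts as `e^{tμ}` times a polynomial in `t`, so
`e^{tA} → 0` when `A` is Hurwitz. The spectrum is finite, so `A + c` is still Hurwitz for some
`c > 0`, and then `e^{tA} = e^{-ct} e^{t(A + c)} = O(e^{-ct})`, which makes the integrand
integrable.
-/

open MeasureTheory Matrix NormedSpace

attribute [local instance] Matrix.normedAddCommGroup Matrix.normedSpace

/-- `A` is Hurwitz: every complex eigenvalue of `A` has strictly negative real part. -/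
def IsHurwitz {N : ℕ} (A : Matrix (Fin N) (Fin N) ℝ) : Prop :=
  ∀ μ ∈ spectrum ℂ (A.map Complex.ofReal), μ.re < 0

open Filter Topology Asymptotics

theorem Complex.tendsto_exp_mul_mul_pow_atTop {μ : ℂ} (hμ : μ.re < 0) (m : ℕ) :
    Tendsto (fun t : ℝ => Complex.exp (t * μ) * (t : ℂ) ^ m) atTop (𝓝 0) := by
  have hreal : Tendsto (fun t : ℝ => Real.exp (μ.re * t) * t ^ (m : ℝ)) atTop (𝓝 0) := by
    simpa using (isLittleO_exp_mul_rpow_of_lt (m : ℝ) hμ).tendsto_div_nhds_zero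
  rw [tendsto_zero_iff_norm_tendsto_zero]
  refine hreal.congr' ((eventually_ge_atTop 0).mono fun t ht => ?_)
  simp [Complex.norm_exp, Real.rpow_natCast, abs_of_nonneg ht, mul_comm]

theorem hasDerivAt_exp_smul_mul_mul_exp_smul {𝕂 𝔸 : Type*} [RCLike 𝕂] [NormedRing 𝔸]
    [NormedAlgebra 𝕂 𝔸] [CompleteSpace 𝔸] (a w : 𝔸) (t : 𝕂) :
    HasDerivAt (fun s : 𝕂 => exp (s • a) * w * exp (s • a))
      (exp (t • a) * (a * w + w * a) * exp (t • a)) t := by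
  convert ((hasDerivAt_exp_smul_const a t).mul_const w).fun_mul
    (hasDerivAt_exp_smul_const' a t) using 1
  noncomm_ring

theorem integrableOn_Ioi_of_isBigO_exp_neg {E : Type*} [NormedAddCommGroup E] {f : ℝ → E}
    {a b : ℝ} (hb : 0 < b) (hf : ContinuousOn f (Set.Ici a))
    (ho : f =O[atTop] fun x => Real.exp (-b * x)) : IntegrableOn f (Set.Ioi a) :=
  integrableOn_Ici_iff_integrableOn_Ioi (by finiteness) |>.mp <|
    (hf.locallyIntegrableOn measurableSet_Ici).integrableOn_of_isBigO_atTop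
    ho ⟨Set.Ioi b, Ioi_mem_atTop b, exp_neg_integrableOn_Ioi b hb⟩

/- `exp`, limits and derivatives only see the topology, which all matrix norms share; the
`L∞` operator norm makes square matrices a Banach algebra, so the general lemmas about `exp`
apply, and the results hold verbatim for the sup norm of the statement. -/
section OperatorNorm

attribute [-instance] Matrix.normedAddCommGroup Matrix.normedSpace
attribute [local instance] Matrix.linftyOpNormedRing Matrix.linftyOpNormedAlgebra

variable {ι : Type*} [Fintype ι] [DecidableEq ι]

theorem Matrix.hasDerivAt_exp_smul_mul_mul_exp_smul (A W : Matrix ι ι ℝ) (t : ℝ) :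
    HasDerivAt (fun s : ℝ => exp (s • A) * W * exp (s • A))
      (exp (t • A) * (A * W + W * A) * exp (t • A)) t :=
  _root_.hasDerivAt_exp_smul_mul_mul_exp_smul A W t

theorem Matrix.exp_mulVec_eq_sum_of_pow_mulVec_eq_zero {𝕂 : Type*} [RCLike 𝕂]
    {N : Matrix ι ι 𝕂} {v : ι → 𝕂} {k : ℕ} (hv : N ^ k *ᵥ v = 0) :
    exp N *ᵥ v = ∑ m ∈ Finset.range k, ((m.factorial : 𝕂)⁻¹) • (N ^ m *ᵥ v) := by
  let evalAt : Matrix ι ι 𝕂 →L[𝕂] ι → 𝕂 :=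
    LinearMap.toContinuousLinearMap (LinearMap.applyₗ v ∘ₗ Matrix.toLin'.toLinearMap)
  have hvanish : ∀ m ∉ Finset.range k, ((m.factorial : 𝕂)⁻¹) • (N ^ m *ᵥ v) = 0 := fun m hm => by
    rw [← Nat.sub_add_cancel (not_lt.mp (Finset.mem_range.not.mp hm)), pow_add,
      ← Matrix.mulVec_mulVec, hv, Matrix.mulVec_zero, smul_zero]
  calc exp N *ᵥ v = evalAt (∑' m : ℕ, ((m.factorial : 𝕂)⁻¹) • N ^ m) := by
        rw [exp_eq_tsum 𝕂]; rfl
    _ = ∑' m : ℕ, ((m.factorial : 𝕂)⁻¹) • (N ^ m *ᵥ v) := by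
        rw [evalAt.map_tsum (expSeries_summable' N)]
        exact tsum_congr fun m => Matrix.smul_mulVec _ _ _
    _ = _ := tsum_eq_sum hvanish

theorem Matrix.exp_smul_one {𝕂 : Type*} [RCLike 𝕂] (r : 𝕂) :
    exp (r • (1 : Matrix ι ι 𝕂)) = exp r • 1 := by
  rw [← Algebra.algebraMap_eq_smul_one, ← Algebra.algebraMap_eq_smul_one]
  exact (algebraMap_exp_comm r).symm

theorem Matrix.map_ofReal_exp (A : Matrix ι ι ℝ) :
    (exp A).map Complex.ofReal = exp (A.map Complex.ofReal) :=
  map_exp (Complex.ofRealHom.mapMatrix : Matrix ι ι ℝ →+* Matrix ι ι ℂ)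
    (continuous_id.matrix_map Complex.continuous_ofReal) A

theorem Matrix.exp_smul_mulVec_eq_sum {A : Matrix ι ι ℂ} {μ : ℂ} {v : ι → ℂ} {k : ℕ}
    (hv : (A - μ • 1) ^ k *ᵥ v = 0) (t : ℝ) :
    exp (t • A) *ᵥ v = ∑ m ∈ Finset.range k,
      (Complex.exp (t * μ) * (t : ℂ) ^ m / m.factorial) • ((A - μ • 1) ^ m *ᵥ v) := by
  set N := A - μ • 1
  have hsplit : t • A = ((t : ℂ) * μ) • 1 + (t : ℂ) • N := by
    simp [N, smul_sub, smul_smul, Complex.coe_smul]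
  have hNv : ((t : ℂ) • N) ^ k *ᵥ v = 0 := by
    rw [smul_pow, Matrix.smul_mulVec, hv, smul_zero]
  rw [hsplit, Matrix.exp_add_of_commute _ _ ((Commute.one_left _).smul_left _), exp_smul_one,
    ← Matrix.mulVec_mulVec, exp_mulVec_eq_sum_of_pow_mulVec_eq_zero hNv,
    Matrix.smul_mulVec, Matrix.one_mulVec, Finset.smul_sum, ← Complex.exp_eq_exp_ℂ]
  refine Finset.sum_congr rfl fun m _ => ?_
  rw [smul_pow, Matrix.smul_mulVec, smul_smul, smul_smul]
  ring_nf

theorem Matrix.tendsto_exp_smul_mulVec_of_re_neg {A : Matrix ι ι ℂ} {μ : ℂ}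
    (hμ : μ.re < 0) {v : ι → ℂ} {k : ℕ} (hv : (A - μ • 1) ^ k *ᵥ v = 0) :
    Tendsto (fun t : ℝ => exp (t • A) *ᵥ v) atTop (𝓝 0) := by
  simp_rw [exp_smul_mulVec_eq_sum hv]
  simpa using tendsto_finsetSum (Finset.range k) fun m _ =>
    ((Complex.tendsto_exp_mul_mul_pow_atTop hμ m).div_const _).smul_const ((A - μ • 1) ^ m *ᵥ v)

theorem Matrix.tendsto_exp_smul_mulVec_of_forall_re_neg {A : Matrix ι ι ℂ}
    (hA : ∀ μ ∈ spectrum ℂ A, μ.re < 0) (v : ι → ℂ) :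
    Tendsto (fun t : ℝ => exp (t • A) *ᵥ v) atTop (𝓝 0) := by
  have hv : v ∈ ⨆ μ, Module.End.maxGenEigenspace (toLinAlgEquiv' A) μ := by
    rw [Module.End.iSup_maxGenEigenspace_eq_top]; trivial
  induction hv using Submodule.iSup_induction' with
  | mem μ x hx =>
    rcases eq_or_ne x 0 with rfl | hx0
    · simp
    have hμ : μ ∈ spectrum ℂ A := by
      rw [← AlgEquiv.spectrum_eq toLinAlgEquiv' A]
      exact ((Module.End.hasUnifEigenvalue_iff_hasUnifEigenvalue_one (by simp)).mp
        ((Submodule.ne_bot_iff _).mpr ⟨x, hx, hx0⟩)).mem_spectrum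
    obtain ⟨k, hk⟩ := (Module.End.mem_maxGenEigenspace _ _ _).mp hx
    rw [← map_one toLinAlgEquiv', ← map_smul, ← map_sub, ← map_pow] at hk
    exact tendsto_exp_smul_mulVec_of_re_neg (hA μ hμ) hk
  | zero => simp
  | add x y _ _ hx hy => simpa [Matrix.mulVec_add] using hx.add hy

theorem Matrix.tendsto_exp_smul_of_forall_re_neg {A : Matrix ι ι ℂ}
    (hA : ∀ μ ∈ spectrum ℂ A, μ.re < 0) : Tendsto (fun t : ℝ => exp (t • A)) atTop (𝓝 0) := by
  refine tendsto_pi_nhds.mpr fun i => tendsto_pi_nhds.mpr fun j => ?_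
  simpa [Matrix.mulVec_single] using
    tendsto_pi_nhds.mp (tendsto_exp_smul_mulVec_of_forall_re_neg hA (Pi.single j 1)) i

end OperatorNorm

theorem Matrix.isBigO_mul {ι α 𝕜 : Type*} [Fintype ι] [NontriviallyNormedField 𝕜]
    [CompleteSpace 𝕜] {l : Filter α} {f g : α → Matrix ι ι 𝕜} {u v : α → ℝ}
    (hf : f =O[l] u) (hg : g =O[l] v) : (fun x => f x * g x) =O[l] fun x => u x * v x :=
  (LinearMap.mul 𝕜 (Matrix ι ι 𝕜)).toContinuousBilinearMap.isBoundedBilinearMap.isBigO_comp.trans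
    (hf.norm_left.mul hg.norm_left)

namespace IsHurwitz

variable {N : ℕ} {A : Matrix (Fin N) (Fin N) ℝ}

theorem tendsto_exp_smul (hA : IsHurwitz A) : Tendsto (fun t : ℝ => exp (t • A)) atTop (𝓝 0) := by
  have hmap : ∀ t : ℝ, exp (t • A) = (exp (t • A.map Complex.ofReal)).map Complex.re := fun t => by
    have hsmul : (t • A).map Complex.ofReal = t • A.map Complex.ofReal := by ext; simp
    rw [← hsmul, ← Matrix.map_ofReal_exp, Matrix.map_map]
    ext
    simp
  simp_rw [hmap]
  simpa [Function.comp_def] using ((continuous_id.matrix_map Complex.continuous_re).tendsto 0).comp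
    (Matrix.tendsto_exp_smul_of_forall_re_neg hA)

theorem exists_pos_add_smul_one (hA : IsHurwitz A) : ∃ c > (0 : ℝ), IsHurwitz (A + c • 1) := by
  have hev : ∀ᶠ c in 𝓝 (0 : ℝ), ∀ μ ∈ spectrum ℂ (A.map Complex.ofReal), μ.re + c < 0 :=
    (eventually_all_finite (Matrix.finite_spectrum _)).mpr fun μ hμ =>
      (continuous_const.add continuous_id).continuousAt.eventually_lt continuousAt_const
        (by simpa using hA μ hμ)
  obtain ⟨c, hc, hcpos⟩ :=
    ((hev.filter_mono nhdsWithin_le_nhds).and self_mem_nhdsWithin).exists (f := 𝓝[>] 0)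
  refine ⟨c, hcpos, fun μ hμ => ?_⟩
  have hshift : (A + c • 1).map Complex.ofReal = A.map Complex.ofReal + algebraMap ℂ _ (c : ℂ) := by
    ext i j
    rcases eq_or_ne i j with rfl | h <;> simp [Algebra.algebraMap_eq_smul_one, *]
  rw [hshift, ← spectrum.add_singleton_eq] at hμ
  obtain ⟨ν, hν, _, rfl, rfl⟩ := hμ
  simpa using hc ν hν

theorem exists_isBigO_exp_smul (hA : IsHurwitz A) :
    ∃ c > 0, (fun t : ℝ => exp (t • A)) =O[atTop] fun t => Real.exp (-c * t) := by
  obtain ⟨c, hc, hAc⟩ := hA.exists_pos_add_smul_one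
  refine ⟨c, hc, ?_⟩
  have hsplit : ∀ t : ℝ, exp (t • A) = Real.exp (-c * t) • exp (t • (A + c • 1)) := fun t => by
    rw [smul_add, smul_smul, Matrix.exp_add_of_commute _ _ ((Commute.one_right _).smul_right _),
      Matrix.exp_smul_one, Matrix.mul_smul, Matrix.mul_one, smul_smul, ← Real.exp_eq_exp_ℝ,
      ← Real.exp_add]
    simp [mul_comm]
  simp_rw [hsplit]
  simpa using (isBigO_refl (fun t => Real.exp (-c * t)) atTop).smul
    (hAc.tendsto_exp_smul.isBigO_one ℝ)

theorem exists_isBigO_exp_smul_mul_mul_exp_smul (hA : IsHurwitz A) (P : Matrix (Fin N) (Fin N) ℝ) :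
    ∃ c > 0, (fun t : ℝ => exp (t • A) * P * exp (t • A)) =O[atTop] fun t => Real.exp (-c * t) := by
  obtain ⟨c, hc, hE⟩ := hA.exists_isBigO_exp_smul
  refine ⟨2 * c, by positivity, ?_⟩
  refine (Matrix.isBigO_mul (Matrix.isBigO_mul hE (isBigO_const_one ℝ P atTop)) hE).congr_right
    fun t => ?_
  rw [mul_one, ← Real.exp_add]
  ring_nf

end IsHurwitz

theorem crossGramian_of_inverse_sylvester_general {N M : ℕ}
    (W : Matrix (Fin N) (Fin N) ℝ)
    (B : Matrix (Fin N) (Fin M) ℝ)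
    (A : Matrix (Fin N) (Fin N) ℝ) (hA : IsHurwitz A)
    (hAW : A * W + W * A = -(B * Bᵀ)) :
    (∫ t in Set.Ioi (0 : ℝ), NormedSpace.exp (t • A) * B * Bᵀ * NormedSpace.exp (t • A)) = W := by
  have hderiv : ∀ t : ℝ, HasDerivAt (fun s : ℝ => -(exp (s • A) * W * exp (s • A)))
      (exp (t • A) * (B * Bᵀ) * exp (t • A)) t := fun t => by
    have h := (Matrix.hasDerivAt_exp_smul_mul_mul_exp_smul A W t).fun_neg
    rwa [hAW, Matrix.mul_neg, Matrix.neg_mul, neg_neg] at h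
  have hcont : Continuous fun t : ℝ => exp (t • A) * (B * Bᵀ) * exp (t • A) :=
    continuous_iff_continuousAt.mpr fun t =>
      (Matrix.hasDerivAt_exp_smul_mul_mul_exp_smul A (B * Bᵀ) t).continuousAt
  have hlim : Tendsto (fun s : ℝ => -(exp (s • A) * W * exp (s • A))) atTop (𝓝 0) := by
    simpa using ((hA.tendsto_exp_smul.mul_const W).mul hA.tendsto_exp_smul).neg
  obtain ⟨c, hc, hdecay⟩ := hA.exists_isBigO_exp_smul_mul_mul_exp_smul (B * Bᵀ)
  simp_rw [Matrix.mul_assoc _ B Bᵀ]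
  rw [integral_Ioi_of_hasDerivAt_of_tendsto' (fun t _ => hderiv t)
    (integrableOn_Ioi_of_isBigO_exp_neg hc hcont.continuousOn hdecay) hlim]
  simp

/-- If `W` is symmetric positive definite, `A` is Hurwitz and `A W + W A = -B Bᵀ`,
then the cross Gramian of the state-space symmetric system `(A, B, Bᵀ)` equals the
prescribed matrix `W`. -/
theorem crossGramian_of_inverse_sylvester {N M : ℕ}
    (W : Matrix (Fin N) (Fin N) ℝ) (hW : W.PosDef)
    (B : Matrix (Fin N) (Fin M) ℝ)
    (A : Matrix (Fin N) (Fin N) ℝ) (hA : IsHurwitz A)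
    (hAW : A * W + W * A = -(B * Bᵀ)) :
    (∫ t in Set.Ioi (0 : ℝ), NormedSpace.exp (t • A) * B * Bᵀ * NormedSpace.exp (t • A)) = W :=
  crossGramian_of_inverse_sylvester_general W B A hA hAW
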